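/- Let E be an ultrametric Banach space over a complete ultrametric field K, U ⊆ E open, f : U → E analytic, and p ∈ U a fixed point of f such that α := f'(p) is a bicontinuous linear automorphism of E. Then the following are equivalent: (a) E admits a centre subspace (with a = 1) with respect to α, and each neighbourhood P of p in U contains a neighbourhood Q of p such that f(Q) = Q; (b) there exists an ultrametric norm on E defining its topology which makes α an isometry (‖α(x)‖ = ‖x‖ for all x ∈ E). -/

import Mathlib

/-!
If `α` is an isometry for `N`, then near `p` both `f` and its local inverse (inverse function
theorem) differ from `α`, resp. `α⁻¹`, by an error of size at most `N (x - p)`, so by the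
ultrametric inequality both map every small `N`-ball around `p` into itself; hence `f` maps such
a ball onto itself, and `Ec = E` is a centre subspace.

Conversely, let `Q ∋ p` be a neighbourhood with `f '' Q = Q` inside an `N`-ball on which the
error is at most `κ * N (x - p)`, `κ < 1`. Along the forward orbit of a point `p + u`,
`u ∈ Eu \ 0`, the unstable component dominates and grows geometrically; along a backward orbit
of `p + s` in `Q`, `s ∈ Es \ 0`, the stable component dominates and grows geometrically. Both
contradict the boundedness of `Q`, so `Es = Eu = 0` and `α = α|Ec` is an isometry.
-/

open Filter Topology

/-- `N` is an ultrametric norm on the `K`-vector space `E`. -/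
def IsUltraNorm (K : Type*) [NormedField K] {E : Type*} [AddCommGroup E] [Module K E]
    (N : E → ℝ) : Prop :=
  (∀ x : E, 0 ≤ N x) ∧ (∀ x : E, N x = 0 ↔ x = 0) ∧
    (∀ (c : K) (x : E), N (c • x) = ‖c‖ * N x) ∧
    ∀ x y : E, N (x + y) ≤ max (N x) (N y)

/-- The norm `N` defines the canonical topology of `E`, i.e. it is equivalent
to the ambient norm. -/
def DefinesTopology {E : Type*} [NormedAddCommGroup E] (N : E → ℝ) : Prop :=
  ∃ c > 0, ∃ C > 0, ∀ x : E, c * ‖x‖ ≤ N x ∧ N x ≤ C * ‖x‖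

namespace IsUltraNorm

variable {K : Type*} [NormedField K] {E : Type*} [AddCommGroup E] [Module K E] {N : E → ℝ}

theorem nonneg (hN : IsUltraNorm K N) (x : E) : 0 ≤ N x := hN.1 x

theorem eq_zero_iff (hN : IsUltraNorm K N) {x : E} : N x = 0 ↔ x = 0 := hN.2.1 x

theorem add_le (hN : IsUltraNorm K N) (x y : E) : N (x + y) ≤ max (N x) (N y) := hN.2.2.2 x y

theorem map_zero (hN : IsUltraNorm K N) : N 0 = 0 := hN.eq_zero_iff.2 rfl

theorem map_neg (hN : IsUltraNorm K N) (x : E) : N (-x) = N x := by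
  simpa using hN.2.2.1 (-1) x

theorem sub_le (hN : IsUltraNorm K N) (x y : E) : N (x - y) ≤ max (N x) (N y) := by
  simpa [sub_eq_add_neg, hN.map_neg] using hN.add_le x (-y)

theorem add_eq_left (hN : IsUltraNorm K N) {x y : E} (h : N y < N x) : N (x + y) = N x := by
  refine le_antisymm ((hN.add_le x y).trans (max_le le_rfl h.le)) ?_
  have hx : N x ≤ max (N (x + y)) (N y) := by simpa using hN.sub_le (x + y) y
  exact (le_max_iff.1 hx).resolve_right h.not_ge

end IsUltraNorm

namespace DefinesTopology

variable {E : Type*} [NormedAddCommGroup E] {N : E → ℝ}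

theorem hasBasis_nhds (hN : DefinesTopology N) (p : E) :
    (𝓝 p).HasBasis (fun r : ℝ => 0 < r) fun r => {x | N (x - p) ≤ r} := by
  obtain ⟨c, hc, C, hC, hNC⟩ := hN
  refine Metric.nhds_basis_closedBall.to_hasBasis (fun ε hε => ⟨c * ε, by positivity, ?_⟩)
    fun r hr => ⟨r / C, by positivity, fun x hx => ?_⟩
  · intro x hx
    rw [Metric.mem_closedBall, dist_eq_norm]
    exact le_of_mul_le_mul_left ((hNC _).1.trans hx) hc
  · rw [Metric.mem_closedBall, dist_eq_norm, le_div_iff₀ hC] at hx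
    exact (hNC _).2.trans (by linarith)

theorem eventually_le_of_isLittleO (hN : DefinesTopology N) {ι : Type*} {l : Filter ι}
    {g h : ι → E} (hgh : g =o[l] h) {ε : ℝ} (hε : 0 < ε) :
    ∀ᶠ i in l, N (g i) ≤ ε * N (h i) := by
  obtain ⟨c, hc, C, hC, hNC⟩ := hN
  filter_upwards [hgh.def (by positivity : 0 < ε * c / C)] with i hi
  calc N (g i) ≤ C * ‖g i‖ := (hNC _).2
    _ ≤ C * (ε * c / C * ‖h i‖) := by gcongr
    _ = ε * (c * ‖h i‖) := by field_simp
    _ ≤ ε * N (h i) := by gcongr; exact (hNC _).1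

end DefinesTopology

theorem Submodule.eq_bot_of_forall_add_mem_eq_zero {K : Type*} [NontriviallyNormedField K]
    {E : Type*} [NormedAddCommGroup E] [NormedSpace K E] {W : Submodule K E} {p : E}
    {Q : Set E} (hQ : Q ∈ 𝓝 p) (h : ∀ w ∈ W, p + w ∈ Q → w = 0) : W = ⊥ := by
  refine (Submodule.eq_bot_iff W).2 fun w hw => by_contra fun hw0 => ?_
  have hlim : Tendsto (fun k : K => p + k • w) (𝓝[≠] 0) (𝓝 p) := by
    have : Continuous fun k : K => p + k • w := by fun_prop
    simpa using (this.tendsto 0).mono_left nhdsWithin_le_nhds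
  obtain ⟨k, hkQ, hk0⟩ := ((hlim.eventually hQ).and self_mem_nhdsWithin).exists
  exact smul_ne_zero hk0 hw0 (h _ (W.smul_mem k hw) hkQ)

section Isometry

variable {K : Type*} [NontriviallyNormedField K] {E : Type*} [NormedAddCommGroup E]
  [NormedSpace K E] {N : E → ℝ}

theorem eventually_le_of_hasFDerivAt_isometry (hN : IsUltraNorm K N) (hNt : DefinesTopology N)
    {f : E → E} {α : E →L[K] E} {p : E} (hf : HasFDerivAt f α p) (hfp : f p = p)
    (hα : ∀ x, N (α x) = N x) : ∀ᶠ x in 𝓝 p, N (f x - p) ≤ N (x - p) := by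
  filter_upwards [hNt.eventually_le_of_isLittleO hf.isLittleO one_pos] with x hx
  calc N (f x - p) = N (α (x - p) + (f x - f p - α (x - p))) := by rw [hfp]; abel_nf
    _ ≤ N (x - p) := (hN.add_le _ _).trans (max_le (hα _).le (by simpa [hfp] using hx))

theorem exists_image_eq_of_isometry [CompleteSpace E] (hN : IsUltraNorm K N)
    (hNt : DefinesTopology N) {f : E → E} {α : E ≃L[K] E} {p : E}
    (hf : HasStrictFDerivAt f (α : E →L[K] E) p) (hfp : f p = p) (hα : ∀ x, N (α x) = N x)
    {P : Set E} (hP : P ∈ 𝓝 p) : ∃ Q ⊆ P, Q ∈ 𝓝 p ∧ f '' Q = Q := by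
  set g := hf.localInverse f α p
  have hg : HasFDerivAt g (α.symm : E →L[K] E) p := hfp ▸ hf.to_localInverse.hasFDerivAt
  have hgp : g p = p := by simpa [hfp] using hf.localInverse_apply_image
  have hαsymm : ∀ x, N (α.symm x) = N x := fun x => by rw [← hα, α.apply_symm_apply]
  obtain ⟨r, hr, hball⟩ := (hNt.hasBasis_nhds p).eventually_iff.1
    (Filter.Eventually.and hP
      ((eventually_le_of_hasFDerivAt_isometry hN hNt hf.hasFDerivAt hfp hα).and
        ((eventually_le_of_hasFDerivAt_isometry hN hNt hg hgp hαsymm).and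
          (hfp ▸ hf.eventually_right_inverse))))
  refine ⟨_, fun x hx => (hball hx).1, (hNt.hasBasis_nhds p).mem_of_mem hr,
    Set.Subset.antisymm ?_ fun y hy => ⟨g y, (hball hy).2.2.1.trans hy, (hball hy).2.2.2⟩⟩
  rintro _ ⟨x, hx, rfl⟩
  exact (hball hx).2.1.trans hx

end Isometry

structure CentreDecomposition {K : Type*} [NormedField K] {E : Type*} [AddCommGroup E]
    [Module K E] (α : E →ₗ[K] E) (N : E → ℝ) where
  Es : Submodule K E
  Ec : Submodule K E
  Eu : Submodule K E
  mapsTo_s : ∀ x ∈ Es, α x ∈ Es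
  mapsTo_c : ∀ x ∈ Ec, α x ∈ Ec
  mapsTo_u : ∀ x ∈ Eu, α x ∈ Eu
  sup_eq_top : Es ⊔ Ec ⊔ Eu = ⊤
  isUltraNorm : IsUltraNorm K N
  norm_add_add :
    ∀ x ∈ Es, ∀ y ∈ Ec, ∀ z ∈ Eu, N (x + y + z) = max (N x) (max (N y) (N z))
  norm_map_c : ∀ y ∈ Ec, N (α y) = N y
  stableRate : ℝ
  stableRate_lt_one : stableRate < 1
  norm_map_s_le : ∀ x ∈ Es, N (α x) ≤ stableRate * N x
  unstableRate : ℝ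
  one_lt_unstableRate : 1 < unstableRate
  le_norm_map_u : ∀ z ∈ Eu, unstableRate * N z ≤ N (α z)

namespace CentreDecomposition

variable {K : Type*} [NormedField K] {E : Type*} [AddCommGroup E] [Module K E]
  {α : E →ₗ[K] E} {N : E → ℝ} (S : CentreDecomposition α N)

theorem exists_decomp (v : E) :
    ∃ c : E × E × E,
      c.1 ∈ S.Es ∧ c.2.1 ∈ S.Ec ∧ c.2.2 ∈ S.Eu ∧ c.1 + c.2.1 + c.2.2 = v := by
  obtain ⟨a, ha, u, hu, rfl⟩ :=
    Submodule.mem_sup.1 (S.sup_eq_top ▸ Submodule.mem_top (x := v))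
  obtain ⟨s, hs, c, hc, rfl⟩ := Submodule.mem_sup.1 ha
  exact ⟨(s, c, u), hs, hc, hu, rfl⟩

noncomputable def projS (v : E) : E := (S.exists_decomp v).choose.1

noncomputable def projC (v : E) : E := (S.exists_decomp v).choose.2.1

noncomputable def projU (v : E) : E := (S.exists_decomp v).choose.2.2

theorem projS_mem (v : E) : S.projS v ∈ S.Es := (S.exists_decomp v).choose_spec.1

theorem projC_mem (v : E) : S.projC v ∈ S.Ec := (S.exists_decomp v).choose_spec.2.1

theorem projU_mem (v : E) : S.projU v ∈ S.Eu := (S.exists_decomp v).choose_spec.2.2.1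

theorem projS_add_projC_add_projU (v : E) : S.projS v + S.projC v + S.projU v = v :=
  (S.exists_decomp v).choose_spec.2.2.2

theorem norm_eq_max_proj (v : E) :
    N v = max (N (S.projS v)) (max (N (S.projC v)) (N (S.projU v))) := by
  conv_lhs => rw [← S.projS_add_projC_add_projU v]
  exact S.norm_add_add _ (S.projS_mem v) _ (S.projC_mem v) _ (S.projU_mem v)

theorem norm_projS_le (v : E) : N (S.projS v) ≤ N v :=
  (S.norm_eq_max_proj v).ge.trans' (le_max_left _ _)

theorem norm_projC_le (v : E) : N (S.projC v) ≤ N v :=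
  (S.norm_eq_max_proj v).ge.trans' ((le_max_left _ _).trans (le_max_right _ _))

theorem norm_projU_le (v : E) : N (S.projU v) ≤ N v :=
  (S.norm_eq_max_proj v).ge.trans' ((le_max_right _ _).trans (le_max_right _ _))

theorem eq_zero_of_add_add_eq_zero {s c u : E} (hs : s ∈ S.Es) (hc : c ∈ S.Ec) (hu : u ∈ S.Eu)
    (h : s + c + u = 0) : s = 0 ∧ c = 0 ∧ u = 0 := by
  have hN := S.isUltraNorm
  have hmax := S.norm_add_add s hs c hc u hu
  rw [h, hN.map_zero] at hmax
  have hle : ∀ x, N x ≤ 0 → x = 0 := fun x hx => hN.eq_zero_iff.1 (hx.antisymm (hN.nonneg x))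
  refine ⟨hle s ?_, hle c ?_, hle u ?_⟩ <;> rw [hmax] <;> simp

theorem proj_eq {v s c u : E} (hs : s ∈ S.Es) (hc : c ∈ S.Ec) (hu : u ∈ S.Eu)
    (hv : s + c + u = v) : S.projS v = s ∧ S.projC v = c ∧ S.projU v = u := by
  simp only [← sub_eq_zero (b := s), ← sub_eq_zero (b := c), ← sub_eq_zero (b := u)]
  refine S.eq_zero_of_add_add_eq_zero (sub_mem (S.projS_mem v) hs) (sub_mem (S.projC_mem v) hc)
    (sub_mem (S.projU_mem v) hu) ?_
  calc _ = (S.projS v + S.projC v + S.projU v) - (s + c + u) := by abel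
    _ = 0 := by rw [S.projS_add_projC_add_projU, hv, sub_self]

theorem proj_map_add (v R : E) :
    S.projS (α v + R) = α (S.projS v) + S.projS R ∧
      S.projC (α v + R) = α (S.projC v) + S.projC R ∧
      S.projU (α v + R) = α (S.projU v) + S.projU R := by
  refine S.proj_eq (add_mem (S.mapsTo_s _ (S.projS_mem v)) (S.projS_mem R))
    (add_mem (S.mapsTo_c _ (S.projC_mem v)) (S.projC_mem R))
    (add_mem (S.mapsTo_u _ (S.projU_mem v)) (S.projU_mem R)) ?_
  calc _ = α (S.projS v + S.projC v + S.projU v) + (S.projS R + S.projC R + S.projU R) := by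
        simp only [map_add]; abel
    _ = α v + R := by rw [S.projS_add_projC_add_projU, S.projS_add_projC_add_projU]

theorem proj_of_mem_s {s : E} (hs : s ∈ S.Es) :
    S.projS s = s ∧ S.projC s = 0 ∧ S.projU s = 0 :=
  S.proj_eq hs (zero_mem _) (zero_mem _) (by simp)

theorem proj_of_mem_u {u : E} (hu : u ∈ S.Eu) :
    S.projS u = 0 ∧ S.projC u = 0 ∧ S.projU u = u :=
  S.proj_eq (zero_mem _) (zero_mem _) hu (by simp)

def UnstableDominates (v : E) : Prop :=
  N (S.projS v) ≤ N (S.projU v) ∧ N (S.projC v) ≤ N (S.projU v)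

def StableDominates (v : E) : Prop :=
  N (S.projC v) ≤ N (S.projS v) ∧ N (S.projU v) ≤ N (S.projS v)

variable {S}

theorem UnstableDominates.norm_eq {v : E} (hv : S.UnstableDominates v) :
    N v = N (S.projU v) := by
  rw [S.norm_eq_max_proj, max_eq_right hv.2, max_eq_right hv.1]

theorem UnstableDominates.map_add {v R : E} (hv : S.UnstableDominates v) (hR : N R ≤ N v) :
    S.UnstableDominates (α v + R) ∧
      S.unstableRate * N (S.projU v) ≤ N (S.projU (α v + R)) := by
  have hN := S.isUltraNorm
  obtain ⟨hws, hwc, hwu⟩ := S.proj_map_add v R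
  set t := N (S.projU v) with ht
  rw [hv.norm_eq] at hR
  have hB := S.one_lt_unstableRate
  have hu : S.unstableRate * t ≤ N (S.projU (α v + R)) := by
    rw [hwu]
    rcases (hN.nonneg (S.projU v)).eq_or_lt with h0 | hpos
    · rw [ht, ← h0, mul_zero]
      exact hN.nonneg _
    · have hRu : N (S.projU R) < N (α (S.projU v)) := calc
        N (S.projU R) ≤ t := (S.norm_projU_le R).trans hR
        _ < S.unstableRate * t := lt_mul_of_one_lt_left hpos hB
        _ ≤ N (α (S.projU v)) := S.le_norm_map_u _ (S.projU_mem v)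
      rw [hN.add_eq_left hRu]
      exact S.le_norm_map_u _ (S.projU_mem v)
  have htu : t ≤ N (S.projU (α v + R)) :=
    (le_mul_of_one_le_left (hN.nonneg _) hB.le).trans hu
  refine ⟨⟨?_, ?_⟩, hu⟩
  · rw [hws]
    refine ((hN.add_le _ _).trans (max_le ?_ ((S.norm_projS_le R).trans hR))).trans htu
    exact ((S.norm_map_s_le _ (S.projS_mem v)).trans
      (mul_le_of_le_one_left (hN.nonneg _) S.stableRate_lt_one.le)).trans hv.1
  · rw [hwc]
    exact ((hN.add_le _ _).trans (max_le ((S.norm_map_c _ (S.projC_mem v)).trans_le hv.2)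
      ((S.norm_projC_le R).trans hR))).trans htu

theorem StableDominates.of_map_add {v R : E} {κ : ℝ} (hw : S.StableDominates (α v + R))
    (hκ0 : 0 ≤ κ) (hκ1 : κ < 1) (hbκ : S.stableRate ≤ κ) (hR : N R ≤ κ * N v) :
    S.StableDominates v ∧ N (S.projS (α v + R)) ≤ κ * N (S.projS v) := by
  have hN := S.isUltraNorm
  obtain ⟨hws, hwc, hwu⟩ := S.proj_map_add v R
  have hs : N (S.projS (α v + R)) ≤ κ * N v := by
    rw [hws]
    refine (hN.add_le _ _).trans (max_le ?_ ((S.norm_projS_le R).trans hR))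
    calc N (α (S.projS v)) ≤ S.stableRate * N (S.projS v) := S.norm_map_s_le _ (S.projS_mem v)
      _ ≤ κ * N (S.projS v) := mul_le_mul_of_nonneg_right hbκ (hN.nonneg _)
      _ ≤ κ * N v := mul_le_mul_of_nonneg_left (S.norm_projS_le v) hκ0
  have hc : N (S.projC v) ≤ κ * N v := by
    rw [← S.norm_map_c _ (S.projC_mem v),
      show α (S.projC v) = S.projC (α v + R) - S.projC R by rw [hwc]; abel]
    exact (hN.sub_le _ _).trans (max_le (hw.1.trans hs) ((S.norm_projC_le R).trans hR))
  have hu : N (S.projU v) ≤ κ * N v := by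
    refine (le_mul_of_one_le_left (hN.nonneg _) S.one_lt_unstableRate.le).trans
      ((S.le_norm_map_u _ (S.projU_mem v)).trans ?_)
    rw [show α (S.projU v) = S.projU (α v + R) - S.projU R by rw [hwu]; abel]
    exact (hN.sub_le _ _).trans (max_le (hw.2.trans hs) ((S.norm_projU_le R).trans hR))
  -- `Ec`- and `Eu`-parts are `≤ κ * N v < N v` (if `v ≠ 0`), so `N v` is attained on `Es`
  have hsv : N (S.projS v) = N v := by
    refine (S.norm_projS_le v).antisymm ((le_max_iff.1 (S.norm_eq_max_proj v).le).elim id ?_)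
    intro hcu
    nlinarith [max_le hc hu, hN.nonneg (S.projS v)]
  have hκv : κ * N v ≤ N v := mul_le_of_le_one_left (hN.nonneg v) hκ1.le
  exact ⟨⟨hc.trans (hκv.trans hsv.ge), hu.trans (hκv.trans hsv.ge)⟩, hsv ▸ hs⟩

theorem eq_zero_of_forward_orbit {v R : ℕ → E} {r : ℝ} (h0 : v 0 ∈ S.Eu)
    (hv : ∀ n, v (n + 1) = α (v n) + R n) (hR : ∀ n, N (R n) ≤ N (v n))
    (hr : ∀ n, N (v n) ≤ r) : v 0 = 0 := by
  have hN := S.isUltraNorm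
  have hB := S.one_lt_unstableRate
  have key : ∀ n, S.UnstableDominates (v n) ∧
      S.unstableRate ^ n * N (v 0) ≤ N (S.projU (v n)) := by
    intro n
    induction n with
    | zero =>
      obtain ⟨hs, hc, hu⟩ := S.proj_of_mem_u h0
      simp [UnstableDominates, hs, hc, hu, hN.map_zero, hN.nonneg]
    | succ n ih =>
      obtain ⟨hdom, hgrow⟩ := ih.1.map_add (hR n)
      rw [hv]
      refine ⟨hdom, ?_⟩
      calc S.unstableRate ^ (n + 1) * N (v 0)
          = S.unstableRate * (S.unstableRate ^ n * N (v 0)) := by ring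
        _ ≤ S.unstableRate * N (S.projU (v n)) := by gcongr; exact ih.2
        _ ≤ _ := hgrow
  refine hN.eq_zero_iff.1 (le_antisymm ?_ (hN.nonneg _))
  by_contra! hpos
  obtain ⟨n, hn⟩ := pow_unbounded_of_one_lt (r / N (v 0)) hB
  rw [div_lt_iff₀ hpos] at hn
  linarith [(key n).2.trans ((S.norm_projU_le _).trans (hr n))]

theorem eq_zero_of_backward_orbit {v R : ℕ → E} {r κ : ℝ} (hκ0 : 0 ≤ κ) (hκ1 : κ < 1)
    (hbκ : S.stableRate ≤ κ) (h0 : v 0 ∈ S.Es) (hv : ∀ n, v n = α (v (n + 1)) + R n)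
    (hR : ∀ n, N (R n) ≤ κ * N (v (n + 1))) (hr : ∀ n, N (v n) ≤ r) : v 0 = 0 := by
  have hN := S.isUltraNorm
  have key : ∀ n, S.StableDominates (v n) ∧ N (v 0) ≤ κ ^ n * N (S.projS (v n)) := by
    intro n
    induction n with
    | zero =>
      obtain ⟨hs, hc, hu⟩ := S.proj_of_mem_s h0
      simp [StableDominates, hs, hc, hu, hN.map_zero, hN.nonneg]
    | succ n ih =>
      obtain ⟨hdom, hshrink⟩ := (hv n ▸ ih.1).of_map_add hκ0 hκ1 hbκ (hR n)
      refine ⟨hdom, ?_⟩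
      calc N (v 0) ≤ κ ^ n * N (S.projS (v n)) := ih.2
        _ ≤ κ ^ n * (κ * N (S.projS (v (n + 1)))) := by rw [hv n]; gcongr
        _ = κ ^ (n + 1) * N (S.projS (v (n + 1))) := by ring
  have hlim := (tendsto_pow_atTop_nhds_zero_of_lt_one hκ0 hκ1).mul_const r
  rw [zero_mul] at hlim
  refine hN.eq_zero_iff.1 (le_antisymm (ge_of_tendsto' hlim fun n => ?_) (hN.nonneg _))
  exact (key n).2.trans (by gcongr; exact (S.norm_projS_le _).trans (hr n))

end CentreDecomposition

namespace CentreDecomposition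

variable {K : Type*} [NontriviallyNormedField K] {E : Type*} [NormedAddCommGroup E]
  [NormedSpace K E] {α : E →ₗ[K] E} {N : E → ℝ} (S : CentreDecomposition α N)
  {f : E → E} {p : E} {Q : Set E} {r : ℝ}

theorem unstable_eq_bot (hQ : Q ∈ 𝓝 p) (hfQ : Set.MapsTo f Q Q)
    (hQr : ∀ x ∈ Q, N (x - p) ≤ r)
    (hrem : ∀ x ∈ Q, N (f x - p - α (x - p)) ≤ N (x - p)) : S.Eu = ⊥ := by
  refine Submodule.eq_bot_of_forall_add_mem_eq_zero hQ fun u hu hpu => ?_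
  have hX : ∀ n, f^[n] (p + u) ∈ Q := fun n => hfQ.iterate n hpu
  simpa using S.eq_zero_of_forward_orbit (v := fun n => f^[n] (p + u) - p)
    (R := fun n => f (f^[n] (p + u)) - p - α (f^[n] (p + u) - p)) (by simpa using hu)
    (fun n => by simp only [Function.iterate_succ_apply']; abel) (fun n => hrem _ (hX n))
    (fun n => hQr _ (hX n))

theorem stable_eq_bot (hQ : Q ∈ 𝓝 p) (hfQ : Set.SurjOn f Q Q)
    (hQr : ∀ x ∈ Q, N (x - p) ≤ r)
    {κ : ℝ} (hκ0 : 0 ≤ κ) (hκ1 : κ < 1) (hbκ : S.stableRate ≤ κ)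
    (hrem : ∀ x ∈ Q, N (f x - p - α (x - p)) ≤ κ * N (x - p)) : S.Es = ⊥ := by
  set g := Function.invFunOn f Q
  refine Submodule.eq_bot_of_forall_add_mem_eq_zero hQ fun s hs hps => ?_
  have hX : ∀ n, g^[n] (p + s) ∈ Q := fun n => hfQ.mapsTo_invFunOn.iterate n hps
  have hfX : ∀ n, f (g^[n + 1] (p + s)) = g^[n] (p + s) := fun n => by
    rw [Function.iterate_succ_apply']
    exact hfQ.rightInvOn_invFunOn (hX n)
  simpa using S.eq_zero_of_backward_orbit (v := fun n => g^[n] (p + s) - p)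
    (R := fun n => f (g^[n + 1] (p + s)) - p - α (g^[n + 1] (p + s) - p)) hκ0 hκ1 hbκ
    (by simpa using hs) (fun n => by simp only [hfX]; abel) (fun n => hrem _ (hX (n + 1)))
    (fun n => hQr _ (hX n))

end CentreDecomposition

theorem CentreDecomposition.centre_eq_top {K : Type*} [NontriviallyNormedField K]
    {E : Type*} [NormedAddCommGroup E] [NormedSpace K E] {α : E →L[K] E} {N : E → ℝ}
    (S : CentreDecomposition (α : E →ₗ[K] E) N) (hNt : DefinesTopology N) {f : E → E}
    {p : E} {U : Set E} (hU : U ∈ 𝓝 p) (hf : HasFDerivAt f α p) (hfp : f p = p)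
    (hstab : ∀ P, P ⊆ U → P ∈ 𝓝 p → ∃ Q, Q ⊆ P ∧ Q ∈ 𝓝 p ∧ f '' Q = Q) :
    S.Ec = ⊤ := by
  set κ := max S.stableRate (1 / 2)
  have hκ0 : 0 < κ := lt_max_of_lt_right one_half_pos
  have hκ1 : κ < 1 := max_lt S.stableRate_lt_one one_half_lt_one
  obtain ⟨r, hr, hball⟩ := (hNt.hasBasis_nhds p).eventually_iff.1
    (Filter.Eventually.and hU (hNt.eventually_le_of_isLittleO hf.isLittleO hκ0))
  obtain ⟨Q, hQP, hQ, hfQ⟩ :=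
    hstab _ (fun x hx => (hball hx).1) ((hNt.hasBasis_nhds p).mem_of_mem hr)
  have hrem : ∀ x ∈ Q, N (f x - p - α (x - p)) ≤ κ * N (x - p) := fun x hx => by
    simpa [hfp] using (hball (hQP hx)).2
  have hEs := S.stable_eq_bot hQ (by simpa [hfQ] using Set.surjOn_image f Q) hQP hκ0.le hκ1
    (le_max_left _ _) hrem
  have hEu := S.unstable_eq_bot hQ (by simpa [hfQ] using Set.mapsTo_image f Q) hQP
    fun x hx => (hrem x hx).trans (mul_le_of_le_one_left (S.isUltraNorm.nonneg _) hκ1.le)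
  simpa [hEs, hEu] using S.sup_eq_top

theorem centre_subspace_and_stable_nbhds_iff_isometry_general
    {K : Type*} [NontriviallyNormedField K]
    {E : Type*} [NormedAddCommGroup E] [NormedSpace K E]
    [CompleteSpace E]
    {U : Set E} (hU : IsOpen U) {f : E → E} (hf : AnalyticOnNhd K f U)
    {p : E} (hp : p ∈ U) (hfp : f p = p)
    (α : E ≃L[K] E) (hα : HasFDerivAt f (α : E →L[K] E) p) :
    ((∃ (Es Ec Eu : Submodule K E) (N : E → ℝ),
        (∀ x ∈ Es, α x ∈ Es) ∧ (∀ x ∈ Ec, α x ∈ Ec) ∧ (∀ x ∈ Eu, α x ∈ Eu) ∧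
        Disjoint Es (Ec ⊔ Eu) ∧ Disjoint Ec Eu ∧ Es ⊔ Ec ⊔ Eu = ⊤ ∧
        Set.BijOn ⇑α (Eu : Set E) (Eu : Set E) ∧
        IsUltraNorm K N ∧ DefinesTopology N ∧
        (∀ x ∈ Es, ∀ y ∈ Ec, ∀ z ∈ Eu, N (x + y + z) = max (N x) (max (N y) (N z))) ∧
        (∀ y ∈ Ec, N (α y) = N y) ∧
        (∃ b, b < 1 ∧ ∀ x ∈ Es, N (α x) ≤ b * N x) ∧
        (∃ b, 1 < b ∧ ∀ z ∈ Eu, b * N z ≤ N (α z))) ∧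
      (∀ P, P ⊆ U → P ∈ 𝓝 p → ∃ Q, Q ⊆ P ∧ Q ∈ 𝓝 p ∧ f '' Q = Q))
    ↔ ∃ N : E → ℝ, IsUltraNorm K N ∧ DefinesTopology N ∧ ∀ x : E, N (α x) = N x := by
  constructor
  · rintro ⟨⟨Es, Ec, Eu, N, hs, hc, hu, -, -, hsup, -, hN, hNt, hmax, hiso, ⟨b, hb, hbs⟩,
      B, hB, hBu⟩, hstab⟩
    let S : CentreDecomposition ((α : E →L[K] E) : E →ₗ[K] E) N :=
      ⟨Es, Ec, Eu, hs, hc, hu, hsup, hN, hmax, hiso, b, hb, hbs, B, hB, hBu⟩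
    have hEc : Ec = ⊤ := S.centre_eq_top hNt (hU.mem_nhds hp) hα hfp hstab
    exact ⟨N, hN, hNt, fun x => hiso x (hEc ▸ Submodule.mem_top)⟩
  · rintro ⟨N, hN, hNt, hiso⟩
    have hstrict : HasStrictFDerivAt f (α : E →L[K] E) p :=
      hα.fderiv ▸ (hf p hp).hasStrictFDerivAt
    refine ⟨⟨⊥, ⊤, ⊥, N, ?_⟩,
      fun P _ hP => exists_image_eq_of_isometry hN hNt hstrict hfp hiso hP⟩
    simpa [hN, hNt, hiso, hN.map_zero, hN.nonneg] using
      (⟨⟨0, one_pos⟩, 2, one_lt_two⟩ : (∃ b : ℝ, b < 1) ∧ ∃ b : ℝ, 1 < b)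

/-- For an analytic map `f` on an open subset of an ultrametric Banach
space, with fixed point `p` whose differential `α = f'(p)` is a bicontinuous automorphism:
`E` has a centre subspace (with `a = 1`) for `α` and every neighbourhood of `p` contains a
neighbourhood `Q` of `p` with `f(Q) = Q`, if and only if `α` is an isometry for some
ultrametric norm defining the topology of `E`. -/
theorem centre_subspace_and_stable_nbhds_iff_isometry
    {K : Type*} [NontriviallyNormedField K] [IsUltrametricDist K] [CompleteSpace K]
    {E : Type*} [NormedAddCommGroup E] [NormedSpace K E] [IsUltrametricDist E]
    [CompleteSpace E]
    {U : Set E} (hU : IsOpen U) {f : E → E} (hf : AnalyticOnNhd K f U)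
    {p : E} (hp : p ∈ U) (hfp : f p = p)
    (α : E ≃L[K] E) (hα : HasFDerivAt f (α : E →L[K] E) p) :
    ((∃ (Es Ec Eu : Submodule K E) (N : E → ℝ),
        (∀ x ∈ Es, α x ∈ Es) ∧ (∀ x ∈ Ec, α x ∈ Ec) ∧ (∀ x ∈ Eu, α x ∈ Eu) ∧
        Disjoint Es (Ec ⊔ Eu) ∧ Disjoint Ec Eu ∧ Es ⊔ Ec ⊔ Eu = ⊤ ∧
        Set.BijOn ⇑α (Eu : Set E) (Eu : Set E) ∧
        IsUltraNorm K N ∧ DefinesTopology N ∧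
        (∀ x ∈ Es, ∀ y ∈ Ec, ∀ z ∈ Eu, N (x + y + z) = max (N x) (max (N y) (N z))) ∧
        (∀ y ∈ Ec, N (α y) = N y) ∧
        (∃ b, b < 1 ∧ ∀ x ∈ Es, N (α x) ≤ b * N x) ∧
        (∃ b, 1 < b ∧ ∀ z ∈ Eu, b * N z ≤ N (α z))) ∧
      (∀ P, P ⊆ U → P ∈ 𝓝 p → ∃ Q, Q ⊆ P ∧ Q ∈ 𝓝 p ∧ f '' Q = Q))
    ↔ ∃ N : E → ℝ, IsUltraNorm K N ∧ DefinesTopology N ∧ ∀ x : E, N (α x) = N x :=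
  centre_subspace_and_stable_nbhds_iff_isometry_general hU hf hp hfp α hα
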